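/- arXiv:2305.00881 — 4 statements merged into one kernel-verified Lean document; each statement's English description precedes it below -/
import Mathlib

section
/- For every real number a > 0, the function x ↦ Γ(x)/Γ(x−a) is strictly increasing on the interval (a, ∞). -/
open Real Set

lemma logGamma_eq (z : ℝ) (hz : 0 < z) :
    Real.log (Real.Gamma z) = Real.log (Real.Gamma (z + 1)) - Real.log z := by
  rw [Real.Gamma_add_one hz.ne', Real.log_mul hz.ne' (Real.Gamma_pos_of_pos hz).ne']
  ring

lemma convexOn_logGamma_shift :
    ConvexOn ℝ (Set.Ioi 0) (fun x : ℝ => Real.log (Real.Gamma (x + 1))) := by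
  refine ⟨convex_Ioi 0, fun x hx y hy p q hp hq hpq => ?_⟩
  have hx1 : (x + 1 : ℝ) ∈ Set.Ioi (0:ℝ) := by simp at hx ⊢; linarith
  have hy1 : (y + 1 : ℝ) ∈ Set.Ioi (0:ℝ) := by simp at hy ⊢; linarith
  have := Real.convexOn_log_Gamma.2 hx1 hy1 hp hq hpq
  simp only [Function.comp, smul_eq_mul] at this ⊢
  have h1 : p * x + q * y + 1 = p * (x + 1) + q * (y + 1) := by nlinarith
  rw [h1]
  exact this

lemma strictConvexOn_logGamma :
    StrictConvexOn ℝ (Set.Ioi 0) (fun x : ℝ => Real.log (Real.Gamma x)) := by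
  have hneg : StrictConvexOn ℝ (Set.Ioi (0:ℝ)) (fun x : ℝ => -Real.log x) :=
    strictConcaveOn_log_Ioi.neg
  have h := convexOn_logGamma_shift.add_strictConvexOn hneg
  refine ⟨convex_Ioi 0, fun x hx y hy hxy a b ha hb hab => ?_⟩
  have hx0 : (0:ℝ) < x := hx
  have hy0 : (0:ℝ) < y := hy
  have hc0 : (0:ℝ) < a • x + b • y := convex_Ioi (0:ℝ) hx hy ha.le hb.le hab
  have hmain := h.2 hx hy hxy ha hb hab
  simp only [Pi.add_apply, smul_eq_mul] at hmain
  show Real.log (Real.Gamma (a • x + b • y)) < a • Real.log (Real.Gamma x) + b • Real.log (Real.Gamma y)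
  simp only [smul_eq_mul] at hc0 ⊢
  rw [logGamma_eq _ hx0, logGamma_eq _ hy0, logGamma_eq _ hc0]
  linarith [hmain]

/-- For every real number `a > 0`, the function `x ↦ Γ(x)/Γ(x−a)` is
strictly increasing on the interval `(a, ∞)`. -/
theorem gamma_ratio_strictMonoOn (a : ℝ) (ha : 0 < a) :
    StrictMonoOn (fun x : ℝ => Real.Gamma x / Real.Gamma (x - a)) (Set.Ioi a) := by
  intro x hx y hy hxy
  simp only [Set.mem_Ioi] at hx hy
  have hxa : 0 < x - a := by linarith
  have hya : 0 < y - a := by linarith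
  have hx0 : 0 < x := by linarith
  have hy0 : 0 < y := by linarith
  set f := fun z : ℝ => Real.log (Real.Gamma z)
  have key : f x + f (y - a) < f (x - a) + f y := by
    set lam : ℝ := (y - x) / (y - x + a)
    set mu : ℝ := a / (y - x + a)
    have hd : 0 < y - x + a := by linarith
    have hlam : 0 < lam := div_pos (by linarith) hd
    have hmu : 0 < mu := div_pos ha hd
    have hsum : lam + mu = 1 := by
      show (y - x) / (y - x + a) + a / (y - x + a) = 1
      rw [← add_div, div_self hd.ne']
    have hne : (x - a) ≠ y := by intro h; linarith
    have h1 : f (lam • (x - a) + mu • y) < lam * f (x - a) + mu * f y := by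
      have := strictConvexOn_logGamma.2 (Set.mem_Ioi.mpr hxa) (Set.mem_Ioi.mpr hy0)
        hne hlam hmu hsum
      simpa [f, smul_eq_mul] using this
    have h2 : f (mu • (x - a) + lam • y) < mu * f (x - a) + lam * f y := by
      have := strictConvexOn_logGamma.2 (Set.mem_Ioi.mpr hxa) (Set.mem_Ioi.mpr hy0)
        hne hmu hlam (by linarith) 
      simpa [f, smul_eq_mul] using this
    have e1 : lam • (x - a) + mu • y = x := by
      simp only [smul_eq_mul, lam, mu]
      field_simp
      ring
    have e2 : mu • (x - a) + lam • y = y - a := by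
      simp only [smul_eq_mul, lam, mu]
      field_simp
      ring
    rw [e1] at h1
    rw [e2] at h2
    have p1 : lam * f (x - a) + mu * f (x - a) = f (x - a) := by
      rw [← add_mul, hsum, one_mul]
    have p2 : lam * f y + mu * f y = f y := by rw [← add_mul, hsum, one_mul]
    linarith
  have hmul : Real.Gamma x * Real.Gamma (y - a) < Real.Gamma (x - a) * Real.Gamma y := by
    have hGx := Real.Gamma_pos_of_pos hx0
    have hGy := Real.Gamma_pos_of_pos hy0
    have hGxa := Real.Gamma_pos_of_pos hxa
    have hGya := Real.Gamma_pos_of_pos hya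
    have := Real.exp_lt_exp.mpr key
    rwa [Real.exp_add, Real.exp_add, Real.exp_log hGx, Real.exp_log hGya,
      Real.exp_log hGxa, Real.exp_log hGy] at this
  have hGxa := Real.Gamma_pos_of_pos hxa
  have hGya := Real.Gamma_pos_of_pos hya
  simp only
  rw [div_lt_div_iff₀ hGxa hGya]
  linarith [hmul]
end

section
/- Let d ∈ ℕ, let ℓ ≥ 0 be an integer, and let α ∈ (0,2). Then the function σ ↦ Φ_{d,ℓ}^{(α)}(σ) is strictly increasing on (−ℓ−α, (d−α)/2]: whenever −ℓ−α < σ₁ < σ₂ ≤ (d−α)/2 one has Φ_{d,ℓ}^{(α)}(σ₁) < Φ_{d,ℓ}^{(α)}(σ₂). Moreover Φ_{d,ℓ}^{(α)}(σ) → −∞ as σ decreases to −ℓ−α. -/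
open Real Filter Finset Topology

/-- The coupling-constant function `Φ_{d,ℓ}^{(α)}(σ)`, defined via the reciprocal
Gamma function (which vanishes at nonpositive integers, as does the inverse of
Mathlib's `Real.Gamma`). -/
noncomputable def Phi (d l : ℕ) (α σ : ℝ) : ℝ :=
  2 ^ α * Real.Gamma (((l : ℝ) + σ + α) / 2) * Real.Gamma (((d : ℝ) + l - σ) / 2) *
    (Real.Gamma (((l : ℝ) + σ) / 2))⁻¹ * (Real.Gamma (((d : ℝ) + l - σ - α) / 2))⁻¹

lemma inv_gamma_shift (x : ℝ) : (Real.Gamma x)⁻¹ = x * (Real.Gamma (x + 1))⁻¹ := by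
  rcases eq_or_ne x 0 with h | h
  · simp [h, Real.Gamma_zero]
  · rw [Real.Gamma_add_one h, mul_inv, ← mul_assoc, mul_inv_cancel₀ h, one_mul]

lemma phi_eq (d l : ℕ) (α σ : ℝ) :
    Phi d l α σ = 2 ^ α * ((((l : ℝ) + σ) / 2) * (((d : ℝ) + l - σ - α) / 2)) *
      (Real.Gamma (((l : ℝ) + σ) / 2 + α / 2) * Real.Gamma (((d : ℝ) + l - σ - α) / 2 + α / 2) *
        (Real.Gamma (((l : ℝ) + σ) / 2 + 1))⁻¹ *
        (Real.Gamma (((d : ℝ) + l - σ - α) / 2 + 1))⁻¹) := by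
  rw [Phi, inv_gamma_shift (((l : ℝ) + σ) / 2), inv_gamma_shift (((d : ℝ) + l - σ - α) / 2),
    show ((l : ℝ) + σ + α) / 2 = ((l : ℝ) + σ) / 2 + α / 2 by ring,
    show ((d : ℝ) + l - σ) / 2 = ((d : ℝ) + l - σ - α) / 2 + α / 2 by ring]
  ring

lemma factor_ineq {c a b a' b' : ℝ} (hc : 0 < c) (ha : 0 < a) (h1 : a ≤ a') (h2 : a' ≤ b')
    (h3 : b' ≤ b) (hs : a + b = a' + b') :
    a * b * ((a' + c) * (b' + c)) ≤ a' * b' * ((a + c) * (b + c)) := by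
  have hd : a' * b' - a * b = (a' - a) * (b - a') := by linear_combination (-a') * hs
  have hab : a * b ≤ a' * b' := by nlinarith [mul_nonneg (sub_nonneg.2 h1) (sub_nonneg.2 (h2.trans h3))]
  have key : a' * b' * ((a + c) * (b + c)) - a * b * ((a' + c) * (b' + c))
      = (c * (a + b) + c ^ 2) * (a' * b' - a * b) := by linear_combination (c * a * b) * hs
  nlinarith [mul_nonneg (show (0:ℝ) ≤ c * (a + b) + c ^ 2 by nlinarith) (by linarith : (0:ℝ) ≤ a' * b' - a * b)]

lemma gs_mul (a b : ℝ) {n : ℕ} (hn : 0 < n) :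
    Real.GammaSeq a n * Real.GammaSeq b n
      = ((n : ℝ) ^ (a + b) * ((n.factorial : ℝ) * n.factorial)) / ∏ j ∈ Finset.range (n + 1), ((a + j) * (b + j)) := by
  have hn' : (0 : ℝ) < n := Nat.cast_pos.2 hn
  rw [Real.GammaSeq, Real.GammaSeq, div_mul_div_comm, mul_mul_mul_comm,
    ← Real.rpow_add hn', ← Finset.prod_mul_distrib]

lemma gammaSeq_prod_le {c x y x' y' : ℝ} (hc : 0 < c) (hx : 0 < x) (h1 : x ≤ x') (h2 : x' ≤ y')
    (h3 : y' ≤ y) (hs : x + y = x' + y') {n : ℕ} (hn : 0 < n) :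
    Real.GammaSeq (x + c) n * Real.GammaSeq (y + c) n * (Real.GammaSeq x' n * Real.GammaSeq y' n) ≤
      Real.GammaSeq (x' + c) n * Real.GammaSeq (y' + c) n *
        (Real.GammaSeq x n * Real.GammaSeq y n) := by
  have hn' : (0 : ℝ) < n := Nat.cast_pos.2 hn
  have hx' : 0 < x' := lt_of_lt_of_le hx h1
  have hy' : 0 < y' := lt_of_lt_of_le hx' h2
  have hy : 0 < y := lt_of_lt_of_le hy' h3
  have prodpos : ∀ a b : ℝ, 0 < a → 0 < b →
      0 < ∏ j ∈ Finset.range (n + 1), ((a + (j : ℝ)) * (b + (j : ℝ))) := by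
    intro a b ha hb
    apply Finset.prod_pos
    intro j _
    have hj : (0 : ℝ) ≤ j := Nat.cast_nonneg j
    exact mul_pos (by linarith) (by linarith)
  rw [gs_mul _ _ hn, gs_mul _ _ hn, gs_mul _ _ hn, gs_mul _ _ hn,
    show x + c + (y + c) = x' + c + (y' + c) by linarith, hs]
  have hnum1 : 0 < (n : ℝ) ^ (x' + c + (y' + c)) * ((n.factorial : ℝ) * n.factorial) := by
    have h1 := Real.rpow_pos_of_pos hn' (x' + c + (y' + c))
    have h2 : (0:ℝ) < (n.factorial : ℝ) := Nat.cast_pos.2 n.factorial_pos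
    positivity
  have hnum2 : 0 < (n : ℝ) ^ (x' + y') * ((n.factorial : ℝ) * n.factorial) := by
    have h1 := Real.rpow_pos_of_pos hn' (x' + y')
    have h2 : (0:ℝ) < (n.factorial : ℝ) := Nat.cast_pos.2 n.factorial_pos
    positivity
  rw [div_mul_div_comm, div_mul_div_comm,
    div_le_div_iff₀ (mul_pos (prodpos _ _ (by linarith) (by linarith)) (prodpos _ _ hx' hy'))
      (mul_pos (prodpos _ _ (by linarith) (by linarith)) (prodpos _ _ hx hy))]
  apply mul_le_mul_of_nonneg_left _ (le_of_lt (mul_pos hnum1 hnum2))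
  rw [← Finset.prod_mul_distrib, ← Finset.prod_mul_distrib]
  apply Finset.prod_le_prod
  · intro j _
    have hj : (0 : ℝ) ≤ j := Nat.cast_nonneg j
    have := mul_pos (mul_pos (show (0:ℝ) < x' + c + j by linarith) (show (0:ℝ) < y' + c + j by linarith))
      (mul_pos (show (0:ℝ) < x + j by linarith) (show (0:ℝ) < y + j by linarith))
    linarith
  · intro j _
    have hj : (0 : ℝ) ≤ j := Nat.cast_nonneg j
    calc (x' + c + j) * (y' + c + j) * ((x + j) * (y + j))
        = (x + j) * (y + j) * ((x' + j + c) * (y' + j + c)) := by ring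
      _ ≤ (x' + j) * (y' + j) * ((x + j + c) * (y + j + c)) :=
          factor_ineq hc (by linarith) (by linarith) (by linarith) (by linarith) (by linarith)
      _ = (x + c + j) * (y + c + j) * ((x' + j) * (y' + j)) := by ring

lemma gammaRatio_le {c x y x' y' : ℝ} (hc : 0 < c) (hx : 0 < x) (h1 : x ≤ x') (h2 : x' ≤ y')
    (h3 : y' ≤ y) (hs : x + y = x' + y') :
    Real.Gamma (x + c) * Real.Gamma (y + c) * (Real.Gamma x' * Real.Gamma y') ≤
      Real.Gamma (x' + c) * Real.Gamma (y' + c) * (Real.Gamma x * Real.Gamma y) := by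
  have t1 : Tendsto (fun n => Real.GammaSeq (x + c) n * Real.GammaSeq (y + c) n *
      (Real.GammaSeq x' n * Real.GammaSeq y' n)) atTop
      (𝓝 (Real.Gamma (x + c) * Real.Gamma (y + c) * (Real.Gamma x' * Real.Gamma y'))) :=
    ((Real.GammaSeq_tendsto_Gamma _).mul (Real.GammaSeq_tendsto_Gamma _)).mul
      ((Real.GammaSeq_tendsto_Gamma _).mul (Real.GammaSeq_tendsto_Gamma _))
  have t2 : Tendsto (fun n => Real.GammaSeq (x' + c) n * Real.GammaSeq (y' + c) n *
      (Real.GammaSeq x n * Real.GammaSeq y n)) atTop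
      (𝓝 (Real.Gamma (x' + c) * Real.Gamma (y' + c) * (Real.Gamma x * Real.Gamma y))) :=
    ((Real.GammaSeq_tendsto_Gamma _).mul (Real.GammaSeq_tendsto_Gamma _)).mul
      ((Real.GammaSeq_tendsto_Gamma _).mul (Real.GammaSeq_tendsto_Gamma _))
  refine le_of_tendsto_of_tendsto t1 t2 ?_
  filter_upwards [eventually_gt_atTop 0] with n hn
  exact gammaSeq_prod_le hc hx h1 h2 h3 hs hn

lemma helper_le {a b g h : ℝ} (hg : 0 < g) (hh : 0 < h) (hab : a * h ≤ b * g) :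
    a * g⁻¹ ≤ b * h⁻¹ := by
  rw [← div_eq_mul_inv, ← div_eq_mul_inv, div_le_div_iff₀ hg hh]
  exact hab

/-- monotonicity of `H(u) = (u+c)(v+c) D(u)`. -/
lemma H_mono {c x y x' y' : ℝ} (hc : 0 < c) (_hc1 : c < 1) (hx : 0 < x + c) (h1 : x ≤ x')
    (h2 : x' ≤ y') (h3 : y' ≤ y) (hs : x + y = x' + y') :
    (x + c) * (y + c) * (Real.Gamma (x + c) * Real.Gamma (y + c) *
        (Real.Gamma (x + 1))⁻¹ * (Real.Gamma (y + 1))⁻¹) ≤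
      (x' + c) * (y' + c) * (Real.Gamma (x' + c) * Real.Gamma (y' + c) *
        (Real.Gamma (x' + 1))⁻¹ * (Real.Gamma (y' + 1))⁻¹) := by
  have hx1 : (0:ℝ) < x + 1 := by linarith
  have key := gammaRatio_le hc hx1 (by linarith : x + 1 ≤ x' + 1) (by linarith : x' + 1 ≤ y' + 1)
    (by linarith : y' + 1 ≤ y + 1) (by linarith)
  rw [show x + 1 + c = (x + c) + 1 by ring, show y + 1 + c = (y + c) + 1 by ring,
    show x' + 1 + c = (x' + c) + 1 by ring, show y' + 1 + c = (y' + c) + 1 by ring,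
    Real.Gamma_add_one (by linarith : x + c ≠ 0), Real.Gamma_add_one (by linarith : y + c ≠ 0),
    Real.Gamma_add_one (by linarith : x' + c ≠ 0),
    Real.Gamma_add_one (by linarith : y' + c ≠ 0)] at key
  have hgx1 : 0 < Real.Gamma (x + 1) := Real.Gamma_pos_of_pos hx1
  have hgy1 : 0 < Real.Gamma (y + 1) := Real.Gamma_pos_of_pos (by linarith)
  have hgx'1 : 0 < Real.Gamma (x' + 1) := Real.Gamma_pos_of_pos (by linarith)
  have hgy'1 : 0 < Real.Gamma (y' + 1) := Real.Gamma_pos_of_pos (by linarith)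
  calc (x + c) * (y + c) * (Real.Gamma (x + c) * Real.Gamma (y + c) *
        (Real.Gamma (x + 1))⁻¹ * (Real.Gamma (y + 1))⁻¹)
      = ((x + c) * (y + c) * (Real.Gamma (x + c) * Real.Gamma (y + c))) *
          (Real.Gamma (x + 1) * Real.Gamma (y + 1))⁻¹ := by rw [mul_inv]; ring
    _ ≤ ((x' + c) * (y' + c) * (Real.Gamma (x' + c) * Real.Gamma (y' + c))) *
          (Real.Gamma (x' + 1) * Real.Gamma (y' + 1))⁻¹ := by
        apply helper_le (mul_pos hgx1 hgy1) (mul_pos hgx'1 hgy'1)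
        nlinarith [key]
    _ = (x' + c) * (y' + c) * (Real.Gamma (x' + c) * Real.Gamma (y' + c) *
          (Real.Gamma (x' + 1))⁻¹ * (Real.Gamma (y' + 1))⁻¹) := by rw [mul_inv]; ring

/-- antitonicity of `D(u)`. -/
lemma D_anti {c x y x' y' : ℝ} (_hc : 0 < c) (hc1 : c < 1) (hx : 0 < x + c) (h1 : x ≤ x')
    (h2 : x' ≤ y') (h3 : y' ≤ y) (hs : x + y = x' + y') :
    Real.Gamma (x' + c) * Real.Gamma (y' + c) *
        (Real.Gamma (x' + 1))⁻¹ * (Real.Gamma (y' + 1))⁻¹ ≤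
      Real.Gamma (x + c) * Real.Gamma (y + c) *
        (Real.Gamma (x + 1))⁻¹ * (Real.Gamma (y + 1))⁻¹ := by
  have key := gammaRatio_le (show (0:ℝ) < 1 - c by linarith) hx
    (by linarith : x + c ≤ x' + c) (by linarith : x' + c ≤ y' + c)
    (by linarith : y' + c ≤ y + c) (by linarith)
  rw [show x + c + (1 - c) = x + 1 by ring, show y + c + (1 - c) = y + 1 by ring,
    show x' + c + (1 - c) = x' + 1 by ring, show y' + c + (1 - c) = y' + 1 by ring] at key
  have hgx : 0 < Real.Gamma (x + c) := Real.Gamma_pos_of_pos hx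
  have hgy : 0 < Real.Gamma (y + c) := Real.Gamma_pos_of_pos (by linarith)
  have hgx' : 0 < Real.Gamma (x' + c) := Real.Gamma_pos_of_pos (by linarith)
  have hgy' : 0 < Real.Gamma (y' + c) := Real.Gamma_pos_of_pos (by linarith)
  calc Real.Gamma (x' + c) * Real.Gamma (y' + c) *
        (Real.Gamma (x' + 1))⁻¹ * (Real.Gamma (y' + 1))⁻¹
      = (Real.Gamma (x' + c) * Real.Gamma (y' + c)) *
          (Real.Gamma (x' + 1) * Real.Gamma (y' + 1))⁻¹ := by rw [mul_inv]; ring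
    _ ≤ (Real.Gamma (x + c) * Real.Gamma (y + c)) *
          (Real.Gamma (x + 1) * Real.Gamma (y + 1))⁻¹ := by
        apply helper_le (mul_pos (Real.Gamma_pos_of_pos (show (0:ℝ) < x' + 1 by linarith))
            (Real.Gamma_pos_of_pos (show (0:ℝ) < y' + 1 by linarith)))
          (mul_pos (Real.Gamma_pos_of_pos (show (0:ℝ) < x + 1 by linarith))
            (Real.Gamma_pos_of_pos (show (0:ℝ) < y + 1 by linarith)))
        nlinarith [key]
    _ = Real.Gamma (x + c) * Real.Gamma (y + c) *
          (Real.Gamma (x + 1))⁻¹ * (Real.Gamma (y + 1))⁻¹ := by rw [mul_inv]; ring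

lemma core_ineq {P1 P2 m1 m2 D1 D2 k : ℝ} (hP : P1 < P2) (hD2 : 0 < D2) (hD : D2 ≤ D1)
    (hm1 : 0 < m1) (hm2 : 0 < m2) (hH : m1 * D1 ≤ m2 * D2) (hm1k : m1 = P1 + k)
    (hm2k : m2 = P2 + k) (hk : 0 < k) : P1 * D1 < P2 * D2 := by
  have hD1 : 0 < D1 := lt_of_lt_of_le hD2 hD
  rcases le_or_gt P2 0 with h | h
  · nlinarith
  · have hr : P1 * m2 < P2 * m1 := by nlinarith
    have s1 : P1 * D1 * m2 < P2 * m1 * D1 := by nlinarith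
    have s2 : P2 * (m1 * D1) ≤ P2 * (m2 * D2) := by nlinarith
    have s3 : P1 * D1 * m2 < P2 * D2 * m2 := by nlinarith
    exact lt_of_mul_lt_mul_right s3 hm2.le

lemma contGamma {p : ℝ} (hp : 0 < p) : ContinuousAt Real.Gamma p :=
  (Real.differentiableAt_Gamma (fun m => by
    have : (0:ℝ) ≤ m := Nat.cast_nonneg m
    nlinarith)).continuousAt

lemma contGammaComp {f : ℝ → ℝ} {x : ℝ} (p : ℝ) (hf : ContinuousAt f x) (hfx : f x = p)
    (hp : ∀ m : ℕ, p ≠ -(m : ℝ)) : ContinuousAt (fun y => Real.Gamma (f y)) x := by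
  have h := (Real.differentiableAt_Gamma (s := p) (by exact_mod_cast hp)).continuousAt
  rw [← hfx] at h
  exact h.comp hf

lemma contGammaCompPos {f : ℝ → ℝ} {x : ℝ} (p : ℝ) (hf : ContinuousAt f x) (hfx : f x = p)
    (hp : 0 < p) : ContinuousAt (fun y => Real.Gamma (f y)) x := by
  apply contGammaComp p hf hfx
  intro m h
  have hm : (0:ℝ) ≤ m := Nat.cast_nonneg m
  rw [h] at hp
  linarith

set_option maxHeartbeats 2000000 in
/-- `σ ↦ Φ_{d,ℓ}^{(α)}(σ)` is strictly increasing on `(−ℓ−α, (d−α)/2]`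
and tends to `−∞` as `σ` decreases to `−ℓ−α`. -/
theorem phi_strictMonoOn_and_tendsto_atBot (d l : ℕ) (hd : 0 < d) (α : ℝ)
    (hα : α ∈ Set.Ioo (0:ℝ) 2) :
    StrictMonoOn (Phi d l α) (Set.Ioc (-(l : ℝ) - α) (((d : ℝ) - α) / 2)) ∧
    Filter.Tendsto (Phi d l α)
      (nhdsWithin (-(l : ℝ) - α) (Set.Ioi (-(l : ℝ) - α))) Filter.atBot := by
  obtain ⟨hα0, hα2⟩ := hα
  have hl0 : (0:ℝ) ≤ l := Nat.cast_nonneg l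
  have hd1 : (1:ℝ) ≤ d := by exact_mod_cast hd
  constructor
  · intro σ₁ hσ₁ σ₂ hσ₂ h12
    obtain ⟨h1a, h1b⟩ := hσ₁
    obtain ⟨h2a, h2b⟩ := hσ₂
    rw [phi_eq, phi_eq]
    set u1 : ℝ := ((l : ℝ) + σ₁) / 2 with hu1
    set v1 : ℝ := ((d : ℝ) + l - σ₁ - α) / 2 with hv1
    set u2 : ℝ := ((l : ℝ) + σ₂) / 2 with hu2
    set v2 : ℝ := ((d : ℝ) + l - σ₂ - α) / 2 with hv2
    have hc : (0:ℝ) < α / 2 := by linarith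
    have hc1 : α / 2 < 1 := by linarith
    have huc1 : 0 < u1 + α / 2 := by rw [hu1]; linarith
    have hu12 : u1 < u2 := by rw [hu1, hu2]; linarith
    have huv2 : u2 ≤ v2 := by rw [hu2, hv2]; linarith
    have hv21 : v2 ≤ v1 := by rw [hv1, hv2]; linarith
    have hsum : u1 + v1 = u2 + v2 := by rw [hu1, hu2, hv1, hv2]; ring
    have huc2 : 0 < u2 + α / 2 := by linarith
    have hvc2 : 0 < v2 + α / 2 := by linarith
    have hvc1 : 0 < v1 + α / 2 := by linarith
    have hH := H_mono hc hc1 huc1 hu12.le huv2 hv21 hsum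
    have hD := D_anti hc hc1 huc1 hu12.le huv2 hv21 hsum
    have hD2pos : 0 < Real.Gamma (u2 + α / 2) * Real.Gamma (v2 + α / 2) *
        (Real.Gamma (u2 + 1))⁻¹ * (Real.Gamma (v2 + 1))⁻¹ := by
      have g1 := Real.Gamma_pos_of_pos huc2
      have g2 := Real.Gamma_pos_of_pos hvc2
      have g3 := Real.Gamma_pos_of_pos (show (0:ℝ) < u2 + 1 by linarith)
      have g4 := Real.Gamma_pos_of_pos (show (0:ℝ) < v2 + 1 by linarith)
      positivity
    rw [mul_assoc ((2:ℝ) ^ α) (u1 * v1), mul_assoc ((2:ℝ) ^ α) (u2 * v2)]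
    apply mul_lt_mul_of_pos_left _ (show (0:ℝ) < 2 ^ α by positivity)
    refine core_ineq (P2 := u2 * v2)
      (k := (α/2) * (u1 + v1) + (α/2)^2) ?_ hD2pos hD
      (mul_pos huc1 hvc1) (mul_pos huc2 hvc2) hH (by ring)
      (by linear_combination (-(α/2)) * hsum) ?_
    · -- u1 * v1 < u2 * v2
      have : u2 * v2 - u1 * v1 = (u2 - u1) * (v2 - u1) := by
        have hv1' : v1 = u2 + v2 - u1 := by linarith
        rw [hv1']; ring
      nlinarith [mul_pos (show (0:ℝ) < u2 - u1 by linarith) (show (0:ℝ) < v2 - u1 by linarith)]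
    · -- 0 < k
      have hs' : u1 + v1 = ((d:ℝ) + 2*l - α) / 2 := by rw [hu1, hv1]; ring
      rw [hs']
      nlinarith [mul_pos hα0 (show (0:ℝ) < (d:ℝ) + 2*l by linarith)]
  · -- tendsto atBot
    have hg : Tendsto (fun σ => Real.Gamma (((l : ℝ) + σ + α) / 2))
        (𝓝[>] (-(l : ℝ) - α)) atTop := by
      have hGamma0 : Tendsto Real.Gamma (𝓝[>] (0:ℝ)) atTop := by
        have h1 : Tendsto (fun x : ℝ => Real.Gamma (x + 1) * x⁻¹) (𝓝[>] (0:ℝ)) atTop := by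
          apply Filter.Tendsto.pos_mul_atTop one_pos _ tendsto_inv_nhdsGT_zero
          have hcont : ContinuousAt (fun x : ℝ => Real.Gamma (x + 1)) 0 :=
            contGammaCompPos 1 (by fun_prop) (by norm_num) one_pos
          have := hcont.tendsto.mono_left (nhdsWithin_le_nhds (s := Set.Ioi (0:ℝ)))
          simpa [Real.Gamma_one] using this
        apply h1.congr'
        filter_upwards [self_mem_nhdsWithin] with x hx
        have hx0 : x ≠ 0 := ne_of_gt hx
        rw [Real.Gamma_add_one hx0, mul_comm x, mul_assoc, mul_inv_cancel₀ hx0, mul_one]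
      have hmap : Tendsto (fun σ => ((l : ℝ) + σ + α) / 2) (𝓝[>] (-(l : ℝ) - α))
          (𝓝[>] (0:ℝ)) := by
        rw [tendsto_nhdsWithin_iff]
        constructor
        · have hcont : Tendsto (fun σ : ℝ => ((l : ℝ) + σ + α) / 2) (𝓝 (-(l : ℝ) - α))
              (𝓝 (((l : ℝ) + (-(l : ℝ) - α) + α) / 2)) := by
            apply Continuous.tendsto
            fun_prop
          have h0 : ((l : ℝ) + (-(l : ℝ) - α) + α) / 2 = 0 := by ring
          rw [h0] at hcont
          exact hcont.mono_left nhdsWithin_le_nhds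
        · filter_upwards [self_mem_nhdsWithin] with σ hσ
          simp only [Set.mem_Ioi] at hσ ⊢
          linarith
      exact hGamma0.comp hmap
    have hne : (-(α/2) : ℝ) ≠ 0 := by intro h; nlinarith [h]
    have hGneg : Real.Gamma (-(α/2)) < 0 := by
      have hrec : Real.Gamma (-(α/2) + 1) = (-(α/2)) * Real.Gamma (-(α/2)) :=
        Real.Gamma_add_one hne
      have hpos : 0 < Real.Gamma (-(α/2) + 1) :=
        Real.Gamma_pos_of_pos (by linarith)
      nlinarith
    have hp2 : ∀ m : ℕ, -(α/2) ≠ -(m : ℝ) := by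
      intro m
      rcases Nat.eq_zero_or_pos m with hm | hm
      · subst hm; simpa using hne
      · have h1 : (1:ℝ) ≤ m := by exact_mod_cast hm
        intro h
        linarith
    have hfc : ContinuousAt (fun σ => 2 ^ α * Real.Gamma (((d : ℝ) + l - σ) / 2) *
        (Real.Gamma (((l : ℝ) + σ) / 2))⁻¹ *
        (Real.Gamma (((d : ℝ) + l - σ - α) / 2))⁻¹) (-(l : ℝ) - α) := by
      have c1 : ContinuousAt (fun σ : ℝ => Real.Gamma (((d : ℝ) + l - σ) / 2)) (-(l:ℝ) - α) :=
        contGammaCompPos (((d:ℝ) + 2*l + α)/2) (by fun_prop) (by ring) (by linarith)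
      have c2 : ContinuousAt (fun σ : ℝ => Real.Gamma (((l : ℝ) + σ) / 2)) (-(l:ℝ) - α) :=
        contGammaComp (-(α/2)) (by fun_prop) (by ring) hp2
      have c3 : ContinuousAt (fun σ : ℝ => Real.Gamma (((d : ℝ) + l - σ - α) / 2))
          (-(l:ℝ) - α) :=
        contGammaCompPos (((d:ℝ) + 2*l)/2) (by fun_prop) (by ring) (by linarith)
      have harg2 : ((l : ℝ) + (-(l:ℝ) - α)) / 2 = -(α/2) := by ring
      have hG2ne : Real.Gamma (((l : ℝ) + (-(l:ℝ) - α)) / 2) ≠ 0 := by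
        rw [harg2]; exact ne_of_lt hGneg
      have hG3ne : Real.Gamma (((d : ℝ) + l - (-(l:ℝ) - α) - α) / 2) ≠ 0 := by
        apply ne_of_gt
        apply Real.Gamma_pos_of_pos
        linarith
      exact ((continuousAt_const.mul c1).mul (c2.inv₀ hG2ne)).mul (c3.inv₀ hG3ne)
    have hf : Tendsto (fun σ => 2 ^ α * Real.Gamma (((d : ℝ) + l - σ) / 2) *
        (Real.Gamma (((l : ℝ) + σ) / 2))⁻¹ *
        (Real.Gamma (((d : ℝ) + l - σ - α) / 2))⁻¹) (𝓝[>] (-(l : ℝ) - α))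
        (𝓝 (2 ^ α * Real.Gamma (((d : ℝ) + l - (-(l:ℝ) - α)) / 2) *
          (Real.Gamma (((l : ℝ) + (-(l:ℝ) - α)) / 2))⁻¹ *
          (Real.Gamma (((d : ℝ) + l - (-(l:ℝ) - α) - α) / 2))⁻¹)) :=
      hfc.tendsto.mono_left nhdsWithin_le_nhds
    have hL : 2 ^ α * Real.Gamma (((d : ℝ) + l - (-(l:ℝ) - α)) / 2) *
        (Real.Gamma (((l : ℝ) + (-(l:ℝ) - α)) / 2))⁻¹ *
        (Real.Gamma (((d : ℝ) + l - (-(l:ℝ) - α) - α) / 2))⁻¹ < 0 := by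
      have harg2 : ((l : ℝ) + (-(l:ℝ) - α)) / 2 = -(α/2) := by ring
      rw [harg2]
      have p1 : (0:ℝ) < 2 ^ α := by positivity
      have p2 : 0 < Real.Gamma (((d : ℝ) + l - (-(l:ℝ) - α)) / 2) :=
        Real.Gamma_pos_of_pos (by linarith)
      have p3 : (Real.Gamma (-(α/2)))⁻¹ < 0 := inv_lt_zero.2 hGneg
      have p4 : 0 < (Real.Gamma (((d : ℝ) + l - (-(l:ℝ) - α) - α) / 2))⁻¹ :=
        inv_pos.2 (Real.Gamma_pos_of_pos (by linarith))
      exact mul_neg_of_neg_of_pos (mul_neg_of_pos_of_neg (mul_pos p1 p2) p3) p4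
    have := Filter.Tendsto.neg_mul_atTop hL hf hg
    apply this.congr
    intro σ
    rw [Phi]
    ring
end

section
/- Let d ∈ ℕ, let ℓ > ℓ′ ≥ 0 be integers, and let α ∈ (0,2). Then for every σ ∈ (−ℓ′−α, (d−α)/2] one has Φ_{d,ℓ}^{(α)}(σ) > Φ_{d,ℓ′}^{(α)}(σ). -/
open MeasureTheory Real Set


noncomputable def Bi (a : ℝ) : ℝ := ∫ t in Set.Ioo (0:ℝ) 1, t ^ (a-1) * (1-t) ^ (-(1/2):ℝ)

lemma beta_cpx_eq {a : ℝ} (t : ℝ) (ht : t ∈ Set.Ioo (0:ℝ) 1) :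
    (t:ℂ) ^ ((a:ℂ) - 1) * (1 - (t:ℂ)) ^ ((1/2:ℂ) - 1)
      = ((t ^ (a-1) * (1-t) ^ (-(1/2):ℝ) : ℝ) : ℂ) := by
  obtain ⟨h0, h1⟩ := ht
  rw [Complex.ofReal_mul, Complex.ofReal_cpow h0.le, Complex.ofReal_cpow (by linarith : (0:ℝ) ≤ 1 - t)]
  push_cast
  norm_num

lemma Bi_integrable {a : ℝ} (ha : 0 < a) :
    IntegrableOn (fun t => t ^ (a-1) * (1-t) ^ (-(1/2):ℝ)) (Set.Ioo (0:ℝ) 1) := by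
  have h := Complex.betaIntegral_convergent (u := (a:ℂ)) (v := (1/2:ℂ))
    (by simpa using ha) (by norm_num)
  rw [intervalIntegrable_iff_integrableOn_Ioc_of_le (by norm_num : (0:ℝ) ≤ 1)] at h
  have h2 : IntegrableOn (fun t : ℝ => (t:ℂ) ^ ((a:ℂ) - 1) * (1 - (t:ℂ)) ^ ((1/2:ℂ) - 1))
      (Set.Ioo (0:ℝ) 1) := h.mono_set Set.Ioo_subset_Ioc_self
  have h3 := h2.re
  refine (integrableOn_congr_fun (fun t ht => ?_) measurableSet_Ioo).mp h3
  show ((t:ℂ) ^ ((a:ℂ) - 1) * (1 - (t:ℂ)) ^ ((1/2:ℂ) - 1)).re = t ^ (a-1) * (1-t) ^ (-(1/2):ℝ)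
  rw [beta_cpx_eq t ht, Complex.ofReal_re]

lemma Bi_gamma {a : ℝ} (ha : 0 < a) :
    Real.Gamma a * Real.Gamma (1/2) = Real.Gamma (a + 1/2) * Bi a := by
  have h := Complex.Gamma_mul_Gamma_eq_betaIntegral (s := (a:ℂ)) (t := (1/2:ℂ))
    (by simpa using ha) (by norm_num)
  have hbeta : Complex.betaIntegral (a:ℂ) (1/2:ℂ) = ((Bi a : ℝ) : ℂ) := by
    rw [Complex.betaIntegral, intervalIntegral.integral_of_le (by norm_num : (0:ℝ) ≤ 1),
      MeasureTheory.integral_Ioc_eq_integral_Ioo]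
    rw [show (∫ t in Set.Ioo (0:ℝ) 1, (t:ℂ) ^ ((a:ℂ) - 1) * (1 - (t:ℂ)) ^ ((1/2:ℂ) - 1))
        = ∫ t in Set.Ioo (0:ℝ) 1, ((t ^ (a-1) * (1-t) ^ (-(1/2):ℝ) : ℝ) : ℂ) from
      setIntegral_congr_fun measurableSet_Ioo (fun t ht => beta_cpx_eq t ht)]
    exact integral_ofReal
  rw [hbeta] at h
  have : ((a:ℂ) + (1/2:ℂ)) = ((a + 1/2 : ℝ) : ℂ) := by push_cast; ring
  rw [this, show ((1/2:ℂ)) = ((1/2:ℝ):ℂ) by norm_num] at h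
  rw [Complex.Gamma_ofReal, Complex.Gamma_ofReal, Complex.Gamma_ofReal] at h
  exact_mod_cast h


lemma Bi_pos {a : ℝ} (ha : 0 < a) : 0 < Bi a := by
  have h1 := Real.Gamma_pos_of_pos ha
  have h2 := Real.Gamma_pos_of_pos (by norm_num : (0:ℝ) < 1/2)
  have h3 := Real.Gamma_pos_of_pos (by linarith : (0:ℝ) < a + 1/2)
  nlinarith [Bi_gamma ha]

lemma Bi_antitone {u v : ℝ} (hu : 0 < u) (huv : u ≤ v) : Bi v ≤ Bi u := by
  refine setIntegral_mono_on (Bi_integrable (lt_of_lt_of_le hu huv)) (Bi_integrable hu)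
    measurableSet_Ioo (fun t ht => ?_)
  refine mul_le_mul_of_nonneg_right
    (Real.rpow_le_rpow_of_exponent_ge ht.1 ht.2.le (by linarith)) ?_
  exact Real.rpow_nonneg (by linarith [ht.2]) _

lemma W_mul' {c e c' x : ℝ} (h : c + e = c') (hx : x ∈ Set.Ioo (0:ℝ) 1) :
    (x ^ (c-1) * (1-x) ^ (-(1/2):ℝ)) * x ^ e = x ^ (c'-1) * (1-x) ^ (-(1/2):ℝ) := by
  rw [show c'-1 = (c-1)+e by linarith, Real.rpow_add hx.1]
  ring

lemma Bi_cheb {u v : ℝ} (hu : 0 < u) (huv : u ≤ v) :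
    Bi (u+1/2) * Bi v ≤ Bi u * Bi (v+1/2) := by
  have hv : 0 < v := lt_of_lt_of_le hu huv
  have hu2 : 0 < u + 1/2 := by linarith
  have hv2 : 0 < v + 1/2 := by linarith
  set W : ℝ → ℝ → ℝ := fun c t => t ^ (c-1) * (1-t) ^ (-(1/2):ℝ) with hW
  have iW : ∀ {c : ℝ}, 0 < c → IntegrableOn (W c) (Set.Ioo (0:ℝ) 1) := fun hc => Bi_integrable hc
  have inner : ∀ x ∈ Set.Ioo (0:ℝ) 1,
      (∫ y in Set.Ioo (0:ℝ) 1, W u y * ((x ^ ((1:ℝ)/2) - y ^ ((1:ℝ)/2)) * (x ^ (v-u) - y ^ (v-u))))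
        = x ^ ((1:ℝ)/2) * x ^ (v-u) * Bi u - x ^ ((1:ℝ)/2) * Bi v
          - x ^ (v-u) * Bi (u+1/2) + Bi (v+1/2) := by
    intro x hx
    have heq : ∀ y ∈ Set.Ioo (0:ℝ) 1,
        W u y * ((x ^ ((1:ℝ)/2) - y ^ ((1:ℝ)/2)) * (x ^ (v-u) - y ^ (v-u)))
          = x ^ ((1:ℝ)/2) * x ^ (v-u) * W u y - x ^ ((1:ℝ)/2) * W v y
            - x ^ (v-u) * W (u+1/2) y + W (v+1/2) y := by
      intro y hy
      have e1 : W u y * y ^ (v-u) = W v y := W_mul' (by ring) hy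
      have e2 : W u y * y ^ ((1:ℝ)/2) = W (u+1/2) y := W_mul' (by ring) hy
      have e3 : W (u+1/2) y * y ^ (v-u) = W (v+1/2) y := W_mul' (by ring) hy
      have e4 : W u y * (y ^ ((1:ℝ)/2) * y ^ (v-u)) = W (v+1/2) y := by
        rw [← mul_assoc, e2, e3]
      linear_combination (-(x ^ ((1:ℝ)/2))) * e1 + (-(x ^ (v-u))) * e2 + e4
    rw [setIntegral_congr_fun measurableSet_Ioo heq]
    have i1 : Integrable (fun y => x ^ ((1:ℝ)/2) * x ^ (v-u) * W u y)
        (volume.restrict (Set.Ioo (0:ℝ) 1)) := (iW hu).const_mul _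
    have i2 : Integrable (fun y => x ^ ((1:ℝ)/2) * W v y)
        (volume.restrict (Set.Ioo (0:ℝ) 1)) := (iW hv).const_mul _
    have i3 : Integrable (fun y => x ^ (v-u) * W (u+1/2) y)
        (volume.restrict (Set.Ioo (0:ℝ) 1)) := (iW hu2).const_mul _
    have i4 : Integrable (W (v+1/2)) (volume.restrict (Set.Ioo (0:ℝ) 1)) := iW hv2
    have i12 : Integrable (fun y => x ^ ((1:ℝ)/2) * x ^ (v-u) * W u y - x ^ ((1:ℝ)/2) * W v y)
        (volume.restrict (Set.Ioo (0:ℝ) 1)) := i1.sub i2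
    have i123 : Integrable (fun y => x ^ ((1:ℝ)/2) * x ^ (v-u) * W u y - x ^ ((1:ℝ)/2) * W v y
        - x ^ (v-u) * W (u+1/2) y) (volume.restrict (Set.Ioo (0:ℝ) 1)) := i12.sub i3
    rw [integral_add i123 i4, integral_sub i12 i3, integral_sub i1 i2,
      integral_const_mul, integral_const_mul, integral_const_mul]
    rfl
  have key : 0 ≤ ∫ x in Set.Ioo (0:ℝ) 1,
      W u x * (x ^ ((1:ℝ)/2) * x ^ (v-u) * Bi u - x ^ ((1:ℝ)/2) * Bi v
        - x ^ (v-u) * Bi (u+1/2) + Bi (v+1/2)) := by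
    refine setIntegral_nonneg measurableSet_Ioo (fun x hx => ?_)
    rw [← inner x hx]
    refine mul_nonneg (mul_nonneg (Real.rpow_nonneg hx.1.le _)
      (Real.rpow_nonneg (by linarith [hx.2]) _)) ?_
    refine setIntegral_nonneg measurableSet_Ioo (fun y hy => ?_)
    refine mul_nonneg (mul_nonneg (Real.rpow_nonneg hy.1.le _)
      (Real.rpow_nonneg (by linarith [hy.2]) _)) ?_
    rcases le_total x y with hxy | hxy
    · have f1 : x ^ ((1:ℝ)/2) ≤ y ^ ((1:ℝ)/2) := Real.rpow_le_rpow hx.1.le hxy (by norm_num)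
      have f2 : x ^ (v-u) ≤ y ^ (v-u) := Real.rpow_le_rpow hx.1.le hxy (by linarith)
      nlinarith [f1, f2]

    · have f1 : y ^ ((1:ℝ)/2) ≤ x ^ ((1:ℝ)/2) := Real.rpow_le_rpow hy.1.le hxy (by norm_num)
      have f2 : y ^ (v-u) ≤ x ^ (v-u) := Real.rpow_le_rpow hy.1.le hxy (by linarith)
      exact mul_nonneg (by linarith) (by linarith)
  have expand : (∫ x in Set.Ioo (0:ℝ) 1,
      W u x * (x ^ ((1:ℝ)/2) * x ^ (v-u) * Bi u - x ^ ((1:ℝ)/2) * Bi v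
        - x ^ (v-u) * Bi (u+1/2) + Bi (v+1/2)))
      = 2 * (Bi u * Bi (v+1/2) - Bi (u+1/2) * Bi v) := by
    have heq : ∀ x ∈ Set.Ioo (0:ℝ) 1,
        W u x * (x ^ ((1:ℝ)/2) * x ^ (v-u) * Bi u - x ^ ((1:ℝ)/2) * Bi v
          - x ^ (v-u) * Bi (u+1/2) + Bi (v+1/2))
        = Bi u * W (v+1/2) x - Bi v * W (u+1/2) x - Bi (u+1/2) * W v x + Bi (v+1/2) * W u x := by
      intro x hx
      have e1 : W u x * x ^ (v-u) = W v x := W_mul' (by ring) hx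
      have e2 : W u x * x ^ ((1:ℝ)/2) = W (u+1/2) x := W_mul' (by ring) hx
      have e3 : W (u+1/2) x * x ^ (v-u) = W (v+1/2) x := W_mul' (by ring) hx
      linear_combination (Bi u * x ^ (v-u) - Bi v) * e2 + Bi u * e3 - Bi (u+1/2) * e1
    rw [setIntegral_congr_fun measurableSet_Ioo heq]
    have i1 : Integrable (fun x => Bi u * W (v+1/2) x)
        (volume.restrict (Set.Ioo (0:ℝ) 1)) := (iW hv2).const_mul _
    have i2 : Integrable (fun x => Bi v * W (u+1/2) x)
        (volume.restrict (Set.Ioo (0:ℝ) 1)) := (iW hu2).const_mul _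
    have i3 : Integrable (fun x => Bi (u+1/2) * W v x)
        (volume.restrict (Set.Ioo (0:ℝ) 1)) := (iW hv).const_mul _
    have i4 : Integrable (fun x => Bi (v+1/2) * W u x)
        (volume.restrict (Set.Ioo (0:ℝ) 1)) := (iW hu).const_mul _
    have i12 : Integrable (fun x => Bi u * W (v+1/2) x - Bi v * W (u+1/2) x)
        (volume.restrict (Set.Ioo (0:ℝ) 1)) := i1.sub i2
    have i123 : Integrable (fun x => Bi u * W (v+1/2) x - Bi v * W (u+1/2) x
        - Bi (u+1/2) * W v x) (volume.restrict (Set.Ioo (0:ℝ) 1)) := i12.sub i3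
    rw [integral_add i123 i4, integral_sub i12 i3, integral_sub i1 i2,
      integral_const_mul, integral_const_mul, integral_const_mul, integral_const_mul]
    show Bi u * Bi (v+1/2) - Bi v * Bi (u+1/2) - Bi (u+1/2) * Bi v + Bi (v+1/2) * Bi u = _
    ring
  rw [expand] at key
  linarith


noncomputable def rr (z : ℝ) : ℝ := Real.Gamma (z + 1/2) / Real.Gamma z

lemma rr_pos {z : ℝ} (hz : 0 < z) : 0 < rr z :=
  div_pos (Real.Gamma_pos_of_pos (by linarith)) (Real.Gamma_pos_of_pos hz)

lemma rr_eq {z : ℝ} (hz : 0 < z) : rr z = Real.Gamma (1/2) / Bi z := by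
  have h := Bi_gamma hz
  have h1 := Real.Gamma_pos_of_pos hz
  have h2 := Bi_pos hz
  rw [rr, div_eq_div_iff h1.ne' h2.ne']
  linarith [h]

lemma rr_mono {u v : ℝ} (hu : 0 < u) (huv : u ≤ v) : rr u ≤ rr v := by
  rw [rr_eq hu, rr_eq (lt_of_lt_of_le hu huv)]
  have h2 := Real.Gamma_pos_of_pos (by norm_num : (0:ℝ) < 1/2)
  exact div_le_div_of_nonneg_left h2.le (Bi_pos (lt_of_lt_of_le hu huv)) (Bi_antitone hu huv)

lemma rr_half {z : ℝ} (hz : 0 < z) : rr z * rr (z + 1/2) = z := by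
  have h1 := Real.Gamma_pos_of_pos hz
  have h2 := Real.Gamma_pos_of_pos (by linarith : (0:ℝ) < z + 1/2)
  have h3 : Real.Gamma (z + 1/2 + 1/2) = z * Real.Gamma z := by
    rw [show z + 1/2 + 1/2 = z + 1 by ring, Real.Gamma_add_one hz.ne']
  rw [rr, rr, h3]
  field_simp

lemma rr_strict {u v : ℝ} (hu : 0 < u) (huv : u < v) : rr u < rr v := by
  rcases lt_or_eq_of_le (rr_mono hu huv.le) with h | h
  · exact h
  exfalso
  have hv : 0 < v := hu.trans huv
  have hru := rr_pos hu
  have h1 : rr (u + 1/2) * rr (u + 1/2 + 1/2) = u + 1/2 := rr_half (by linarith)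
  have h2 : rr (v + 1/2) * rr (v + 1/2 + 1/2) = v + 1/2 := rr_half (by linarith)
  have h3 : rr u * rr (u + 1/2) = u := rr_half hu
  have h4 : rr v * rr (v + 1/2) = v := rr_half hv
  have h5 : rr (u + 1/2 + 1/2) ≤ rr (v + 1/2 + 1/2) := rr_mono (by linarith) (by linarith)
  have p1 : 0 < rr (u + 1/2) := rr_pos (by linarith)
  have p2 : 0 < rr (v + 1/2) := rr_pos (by linarith)
  have p3 : 0 < rr (u + 1/2 + 1/2) := rr_pos (by linarith)
  -- rr(u+1) = (u+1/2) * rr u / u, rr(v+1) = (v+1/2) * rr v / v, rr u = rr v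
  -- (u+1/2)/u > (v+1/2)/v, so rr(u+1) > rr(v+1), contradiction with h5
  have e1 : rr (u + 1/2 + 1/2) * u = (u + 1/2) * rr u := by
    linear_combination (-(rr (u+1/2+1/2))) * h3 + rr u * h1
  have e2 : rr (v + 1/2 + 1/2) * v = (v + 1/2) * rr v := by
    linear_combination (-(rr (v+1/2+1/2))) * h4 + rr v * h2
  rw [← h] at e2
  nlinarith [h5, e1, e2, mul_pos hu hv]

lemma rr_cheb {u v : ℝ} (hu : 0 < u) (huv : u ≤ v) :
    rr u * rr (v + 1/2) ≤ rr (u + 1/2) * rr v := by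
  have hv : 0 < v := lt_of_lt_of_le hu huv
  rw [rr_eq hu, rr_eq hv, rr_eq (by linarith : (0:ℝ) < u + 1/2), rr_eq (by linarith : (0:ℝ) < v + 1/2)]
  rw [div_mul_div_comm, div_mul_div_comm,
    div_le_div_iff₀ (mul_pos (Bi_pos hu) (Bi_pos (by linarith))) (mul_pos (Bi_pos (by linarith)) (Bi_pos hv))]
  have := Bi_cheb hu huv
  nlinarith [this, sq_nonneg (Real.Gamma (1/2)), Real.Gamma_pos_of_pos (by norm_num : (0:ℝ) < 1/2)]

lemma rr_chain {x c : ℝ} (hx : 0 < x) (hc : 0 ≤ c) (k : ℕ) :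
    rr x * rr (x + c + k/2) ≤ rr (x + c) * rr (x + k/2) := by
  induction k with
  | zero => simp [mul_comm]
  | succ k IH =>
    have hA : 0 < x + k/2 := by positivity
    have hcheb := rr_cheb hA (by linarith : x + k/2 ≤ x + k/2 + c)
    -- hcheb : rr (x+k/2) * rr (x+k/2+c+1/2) ≤ rr (x+k/2+1/2) * rr (x+k/2+c)
    have pA' : 0 < rr (x + k/2 + c + 1/2) := rr_pos (by linarith)
    have pA : 0 < rr (x + k/2 + c) := rr_pos (by linarith)
    have pB' : 0 < rr (x + k/2 + 1/2) := rr_pos (by linarith)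
    have pxc : 0 < rr (x + c) := rr_pos (by linarith)
    have px : 0 < rr x := rr_pos hx
    have e1 : x + c + (k:ℝ)/2 = x + k/2 + c := by ring
    have e2 : x + c + ((k:ℕ)+1:ℕ)/2 = x + k/2 + c + 1/2 := by push_cast; ring
    have e3 : x + (((k:ℕ)+1:ℕ):ℝ)/2 = x + k/2 + 1/2 := by push_cast; ring
    rw [e2, e3]
    rw [e1] at IH
    have h1 : rr x * rr (x + k/2 + c) * rr (x + k/2 + c + 1/2)
        ≤ rr (x + c) * rr (x + k/2) * rr (x + k/2 + c + 1/2) :=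
      mul_le_mul_of_nonneg_right IH pA'.le
    have h2 : rr (x + c) * (rr (x + k/2) * rr (x + k/2 + c + 1/2))
        ≤ rr (x + c) * (rr (x + k/2 + 1/2) * rr (x + k/2 + c)) :=
      mul_le_mul_of_nonneg_left hcheb pxc.le
    have h3 : rr x * rr (x + k/2 + c + 1/2) * rr (x + k/2 + c)
        ≤ rr (x + c) * rr (x + k/2 + 1/2) * rr (x + k/2 + c) := by nlinarith [h1, h2]
    exact le_of_mul_le_mul_right h3 pA


lemma Gamma_neg_of_neg {z : ℝ} (h1 : -1 < z) (h2 : z < 0) : Real.Gamma z < 0 := by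
  have h3 : Real.Gamma (z+1) = z * Real.Gamma z := Real.Gamma_add_one (by linarith)
  have h4 : 0 < Real.Gamma (z+1) := Real.Gamma_pos_of_pos (by linarith)
  nlinarith [h3, h4]

lemma sin_pi_mul_pos {z : ℝ} (h1 : 0 < z) (h2 : z < 1) : 0 < Real.sin (π*z) :=
  Real.sin_pos_of_pos_of_lt_pi (by positivity) (by nlinarith [Real.pi_pos])

lemma Gamma_inv_reflect {z : ℝ} (h1 : -1 < z) (h2 : z < 1) :
    (Real.Gamma z)⁻¹ = Real.Gamma (1-z) * Real.sin (π*z) / π := by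
  rcases eq_or_ne z 0 with rfl | hz
  · simp [Real.Gamma_zero]
  have hrefl := Real.Gamma_mul_Gamma_one_sub z
  have hs : Real.sin (π*z) ≠ 0 := by
    rcases lt_or_gt_of_ne hz with hneg | hpos
    · have : 0 < Real.sin (π*(-z)) := sin_pi_mul_pos (by linarith) (by linarith)
      rw [show π*(-z) = -(π*z) by ring, Real.sin_neg] at this
      linarith
    · exact (sin_pi_mul_pos hpos h2).ne'
  have hG1 : 0 < Real.Gamma (1-z) := Real.Gamma_pos_of_pos (by linarith)
  have hGz : Real.Gamma z ≠ 0 := by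
    intro h0
    rw [h0, zero_mul] at hrefl
    have hpi := Real.pi_pos
    rw [eq_comm, div_eq_zero_iff] at hrefl
    rcases hrefl with h | h
    · linarith
    · exact hs h
  have hrefl' : Real.Gamma z * Real.Gamma (1-z) * Real.sin (π*z) = π := by
    rw [hrefl]
    field_simp
  rw [eq_div_iff (Real.pi_pos.ne' : (π:ℝ) ≠ 0), inv_mul_eq_div, div_eq_iff hGz]
  linear_combination -hrefl'

lemma rr_reflect {A : ℝ} (h0 : 0 < A) (h2 : A < 1/2) :
    rr A * Real.cos (π*A) = Real.sin (π*A) * rr (1/2 - A) := by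
  have r1 : Real.Gamma A * Real.Gamma (1-A) * Real.sin (π*A) = π := by
    have := Real.Gamma_mul_Gamma_one_sub A
    rw [this]
    have hs : Real.sin (π*A) ≠ 0 := (sin_pi_mul_pos h0 (by linarith)).ne'
    field_simp
  have r2 : Real.Gamma (A+1/2) * Real.Gamma (1/2-A) * Real.cos (π*A) = π := by
    have h := Real.Gamma_mul_Gamma_one_sub (A+1/2)
    rw [show (1:ℝ) - (A+1/2) = 1/2 - A by ring] at h
    rw [show π*(A+1/2) = π*A + π/2 by ring, Real.sin_add_pi_div_two] at h
    rw [h]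
    have hc : Real.cos (π*A) ≠ 0 := by
      have : 0 < Real.cos (π*A) := Real.cos_pos_of_mem_Ioo
        ⟨by nlinarith [Real.pi_pos], by nlinarith [Real.pi_pos]⟩
      exact this.ne'
    field_simp
  have gA := Real.Gamma_pos_of_pos h0
  have gA2 := Real.Gamma_pos_of_pos (by linarith : (0:ℝ) < A + 1/2)
  have g1A := Real.Gamma_pos_of_pos (by linarith : (0:ℝ) < 1 - A)
  have g12A := Real.Gamma_pos_of_pos (by linarith : (0:ℝ) < 1/2 - A)
  rw [rr, rr, show (1:ℝ)/2 - A + 1/2 = 1 - A by ring]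
  rw [mul_div_assoc', div_mul_eq_mul_div, div_eq_div_iff gA.ne' g12A.ne']
  linear_combination r2 - r1


lemma compare_aux {c a b x y a' b' x' y' : ℝ} (hc : 0 < c) (hx : 0 < x) (hy : 0 < y)
    (hx' : 0 < x') (hy' : 0 < y') (h : x'*y'*(a*b) < a'*b'*(x*y)) :
    c*a*b*x⁻¹*y⁻¹ < c*a'*b'*x'⁻¹*y'⁻¹ := by
  have e1 : c*a*b*x⁻¹*y⁻¹ = c*((a*b)/(x*y)) := by
    rw [div_eq_mul_inv, mul_inv]; ring
  have e2 : c*a'*b'*x'⁻¹*y'⁻¹ = c*((a'*b')/(x'*y')) := by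
    rw [div_eq_mul_inv, mul_inv]; ring
  rw [e1, e2]
  apply mul_lt_mul_of_pos_left _ hc
  rw [div_lt_div_iff₀ (mul_pos hx hy) (mul_pos hx' hy')]
  nlinarith [h]

set_option maxHeartbeats 1000000 in
lemma key_m1 {α C D : ℝ} (hα0 : 0 < α) (hα2 : α < 2)
    (hC : -(α/2) < C) (hCD : C ≤ D) (hCneg : C < 0) (hsum : C + D = (1 - α)/2) :
    2^α * Real.Gamma (C + α/2) * Real.Gamma (D + α/2) * (Real.Gamma C)⁻¹ * (Real.Gamma D)⁻¹
      < 2^α * Real.Gamma (C + α/2 + 1/2) * Real.Gamma (D + α/2 + 1/2)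
        * (Real.Gamma (C + 1/2))⁻¹ * (Real.Gamma (D + 1/2))⁻¹ := by
  have htwo : (0:ℝ) < 2^α := Real.rpow_pos_of_pos (by norm_num) α
  have hA0 : 0 < C + α/2 := by linarith
  have hB0 : 0 < D + α/2 := by linarith
  have gA := Real.Gamma_pos_of_pos hA0
  have gB := Real.Gamma_pos_of_pos hB0
  have gA' := Real.Gamma_pos_of_pos (by linarith : (0:ℝ) < C + α/2 + 1/2)
  have gB' := Real.Gamma_pos_of_pos (by linarith : (0:ℝ) < D + α/2 + 1/2)
  have hCm1 : -1 < C := by linarith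
  have hD2 : D < 1/2 := by linarith
  have hD1 : -1 < D := by linarith
  have e1 : (Real.Gamma C)⁻¹ = Real.Gamma (D+α/2+1/2) * Real.sin (π*C) / π := by
    rw [Gamma_inv_reflect hCm1 (by linarith), show (1:ℝ)-C = D+α/2+1/2 by linarith]
  have e2 : (Real.Gamma D)⁻¹ = Real.Gamma (C+α/2+1/2) * Real.sin (π*D) / π := by
    rw [Gamma_inv_reflect hD1 (by linarith), show (1:ℝ)-D = C+α/2+1/2 by linarith]
  have e3 : (Real.Gamma (C+1/2))⁻¹ = Real.Gamma (D+α/2) * Real.cos (π*C) / π := by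
    rw [Gamma_inv_reflect (by linarith) (by linarith),
      show (1:ℝ)-(C+1/2) = D+α/2 by linarith,
      show π*(C+1/2) = π*C + π/2 by ring, Real.sin_add_pi_div_two]
  have e4 : (Real.Gamma (D+1/2))⁻¹ = Real.Gamma (C+α/2) * Real.cos (π*D) / π := by
    rw [Gamma_inv_reflect (by linarith) (by linarith),
      show (1:ℝ)-(D+1/2) = C+α/2 by linarith,
      show π*(D+1/2) = π*D + π/2 by ring, Real.sin_add_pi_div_two]
  rw [e1, e2, e3, e4]
  have hkey : Real.cos (π*C) * Real.cos (π*D) - Real.sin (π*C) * Real.sin (π*D)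
      = Real.sin (π*(α/2)) := by
    rw [← Real.cos_add, show π*C + π*D = π/2 - π*(α/2) by linear_combination π * hsum,
      Real.cos_pi_div_two_sub]
  have hsin : 0 < Real.sin (π*(α/2)) := sin_pi_mul_pos (by linarith) (by linarith)
  have hpi := Real.pi_pos
  have hid : 2^α * Real.Gamma (C+α/2+1/2) * Real.Gamma (D+α/2+1/2)
        * (Real.Gamma (D+α/2) * Real.cos (π*C) / π) * (Real.Gamma (C+α/2) * Real.cos (π*D) / π)
      - 2^α * Real.Gamma (C+α/2) * Real.Gamma (D+α/2)
        * (Real.Gamma (D+α/2+1/2) * Real.sin (π*C) / π) * (Real.Gamma (C+α/2+1/2) * Real.sin (π*D) / π)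
      = (2^α * Real.Gamma (C+α/2) * Real.Gamma (D+α/2) * Real.Gamma (C+α/2+1/2)
          * Real.Gamma (D+α/2+1/2) / (π*π))
        * (Real.cos (π*C) * Real.cos (π*D) - Real.sin (π*C) * Real.sin (π*D)) := by
    ring
  rw [hkey] at hid
  have hfac : 0 < (2^α * Real.Gamma (C+α/2) * Real.Gamma (D+α/2) * Real.Gamma (C+α/2+1/2)
      * Real.Gamma (D+α/2+1/2) / (π*π)) * Real.sin (π*(α/2)) := by
    apply mul_pos _ hsin
    apply div_pos _ (mul_pos hpi hpi)
    exact mul_pos (mul_pos (mul_pos (mul_pos htwo gA) gB) gA') gB'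
  linarith [hid, hfac]

set_option maxHeartbeats 2000000 in
lemma key_core {α C D : ℝ} (hα0 : 0 < α) (hα2 : α < 2) {m : ℕ} (hm : 1 ≤ m)
    (hC : -(α/2) < C) (hc2 : C + 1/2 < 0) (hDpos : 0 < D) (hsum : C + D = (m - α)/2) :
    2^α * Real.Gamma (C + α/2) * Real.Gamma (D + α/2) * (Real.Gamma C)⁻¹ * (Real.Gamma D)⁻¹
      < 2^α * Real.Gamma (C + α/2 + 1/2) * Real.Gamma (D + α/2 + 1/2)
        * (Real.Gamma (C + 1/2))⁻¹ * (Real.Gamma (D + 1/2))⁻¹ := by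
  have htwo : (0:ℝ) < 2^α := Real.rpow_pos_of_pos (by norm_num) α
  have hA0 : 0 < C + α/2 := by linarith
  have hB0 : 0 < D + α/2 := by linarith
  have gA := Real.Gamma_pos_of_pos hA0
  have gB := Real.Gamma_pos_of_pos hB0
  have gA' := Real.Gamma_pos_of_pos (by linarith : (0:ℝ) < C + α/2 + 1/2)
  have gB' := Real.Gamma_pos_of_pos (by linarith : (0:ℝ) < D + α/2 + 1/2)
  have hCm1 : -1 < C := by linarith
  have gD := Real.Gamma_pos_of_pos hDpos
  have gD' := Real.Gamma_pos_of_pos (by linarith : (0:ℝ) < D + 1/2)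
  have hα1 : 1 < α := by linarith
  obtain ⟨θ, hθ⟩ : ∃ θ : ℝ, θ = -C - 1/2 := ⟨_, rfl⟩
  have hθpos : 0 < θ := by rw [hθ]; linarith
  have hθlt : θ < α/2 - 1/2 := by rw [hθ]; linarith
  have hθhalf : θ < 1/2 := by linarith
  have hpi := Real.pi_pos
  have hsθ : 0 < Real.sin (π*θ) := sin_pi_mul_pos hθpos (by linarith)
  have hcθ : 0 < Real.cos (π*θ) := Real.cos_pos_of_mem_Ioo
    ⟨by nlinarith [mul_pos hpi hθpos],
     by nlinarith [mul_pos (sub_pos.mpr hθhalf) hpi]⟩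
  have hA2 : C + α/2 < 1/2 := by linarith
  have hXpos : 0 < 1/2 - (C + α/2) := by linarith
  have gHalfC := Real.Gamma_pos_of_pos (by linarith : (0:ℝ) < 1/2 - C)
  have gOneC := Real.Gamma_pos_of_pos (by linarith : (0:ℝ) < 1 - C)
  have htrig : Real.sin (π*θ) * Real.sin (π*(C+α/2))
      < Real.cos (π*θ) * Real.cos (π*(C+α/2)) := by
    have h6 : 0 < Real.cos (π*θ + π*(C+α/2)) := by
      rw [show π*θ + π*(C+α/2) = π*(α/2-1/2) by rw [hθ]; ring]
      have hb1 : (0:ℝ) < α/2 - 1/2 := by linarith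
      have hb2 : α/2 - 1/2 < 1/2 := by linarith
      exact Real.cos_pos_of_mem_Ioo ⟨by nlinarith [mul_pos hpi hb1],
        by nlinarith [mul_pos (sub_pos.mpr hb2) hpi]⟩
    rw [Real.cos_add] at h6
    linarith
  have hsinA : 0 < Real.sin (π*(C+α/2)) := sin_pi_mul_pos hA0 (by linarith)
  have hcosA : 0 < Real.cos (π*(C+α/2)) := Real.cos_pos_of_mem_Ioo
    ⟨by nlinarith [mul_pos hpi hA0],
     by nlinarith [mul_pos (sub_pos.mpr hA2) hpi]⟩
  have hreflA := rr_reflect hA0 hA2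
  have hrrX : 0 < rr (1/2 - (C+α/2)) := rr_pos (by linarith)
  have step1 : Real.sin (π*θ) * rr (C+α/2)
      < Real.cos (π*θ) * rr (1/2 - (C+α/2)) := by
    have h := mul_lt_mul_of_pos_right htrig hrrX
    have e : Real.sin (π*θ) * rr (C+α/2) * Real.cos (π*(C+α/2))
        = Real.sin (π*θ) * Real.sin (π*(C+α/2)) * rr (1/2 - (C+α/2)) := by
      linear_combination Real.sin (π*θ) * hreflA
    have h2 : Real.sin (π*θ) * rr (C+α/2) * Real.cos (π*(C+α/2))
        < Real.cos (π*θ) * rr (1/2 - (C+α/2)) * Real.cos (π*(C+α/2)) := by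
      rw [e]; nlinarith [h]
    exact lt_of_mul_lt_mul_right h2 hcosA.le
  have hk : ((m - 1 : ℕ) : ℝ) = (m:ℝ) - 1 := by
    push_cast [Nat.cast_sub hm]; ring
  have step2 : rr (1/2 - (C+α/2)) * rr (D+α/2) ≤ rr (1/2 - C) * rr D := by
    have h := rr_chain (x := 1/2 - (C+α/2)) (c := α/2) hXpos (by linarith) (m-1)
    rw [hk] at h
    rw [show (1:ℝ)/2 - (C+α/2) + α/2 + ((m:ℝ)-1)/2 = D + α/2 by linarith,
      show (1:ℝ)/2 - (C+α/2) + α/2 = 1/2 - C by ring,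
      show (1:ℝ)/2 - (C+α/2) + ((m:ℝ)-1)/2 = D by linarith] at h
    exact h
  have hrrB : 0 < rr (D+α/2) := rr_pos hB0
  have hrrD : 0 < rr D := rr_pos hDpos
  have hrrhalfC : 0 < rr (1/2 - C) := rr_pos (by linarith)
  have htarget : Real.sin (π*θ) * (rr (C+α/2) * rr (D+α/2))
      < Real.cos (π*θ) * (rr (1/2-C) * rr D) := by
    have h1 := mul_lt_mul_of_pos_right step1 hrrB
    have h2 := mul_le_mul_of_nonneg_left step2 hcθ.le
    nlinarith [h1, h2]
  simp only [rr] at htarget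
  rw [show (1:ℝ)/2 - C + 1/2 = 1 - C by ring] at htarget
  rw [div_mul_div_comm, div_mul_div_comm, ← mul_div_assoc, ← mul_div_assoc] at htarget
  have hcross := (div_lt_div_iff₀ (mul_pos gA gB) (mul_pos gHalfC gD)).mp htarget
  have e1 : (Real.Gamma C)⁻¹ = Real.Gamma (1-C) * (-Real.cos (π*θ)) / π := by
    rw [Gamma_inv_reflect hCm1 (by linarith),
      show π*C = -(π*θ + π/2) by rw [hθ]; ring, Real.sin_neg,
      Real.sin_add_pi_div_two]
  have e2 : (Real.Gamma (C+1/2))⁻¹ = Real.Gamma (1/2-C) * (-Real.sin (π*θ)) / π := by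
    rw [Gamma_inv_reflect (by linarith) (by linarith),
      show (1:ℝ)-(C+1/2) = 1/2-C by ring,
      show π*(C+1/2) = -(π*θ) by rw [hθ]; ring, Real.sin_neg]
  rw [e1, e2]
  have eL : 2^α * Real.Gamma (C+α/2) * Real.Gamma (D+α/2)
      * (Real.Gamma (1-C) * (-Real.cos (π*θ)) / π) * (Real.Gamma D)⁻¹
      = -((2^α * Real.Gamma (C+α/2) * Real.Gamma (D+α/2) * Real.Gamma (1-C)
        * Real.cos (π*θ)) / (π * Real.Gamma D)) := by
    field_simp
  have eR : 2^α * Real.Gamma (C+α/2+1/2) * Real.Gamma (D+α/2+1/2)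
      * (Real.Gamma (1/2-C) * (-Real.sin (π*θ)) / π) * (Real.Gamma (D+1/2))⁻¹
      = -((2^α * Real.Gamma (C+α/2+1/2) * Real.Gamma (D+α/2+1/2) * Real.Gamma (1/2-C)
        * Real.sin (π*θ)) / (π * Real.Gamma (D+1/2))) := by
    field_simp
  rw [eL, eR, neg_lt_neg_iff]
  rw [div_lt_div_iff₀ (mul_pos hpi gD') (mul_pos hpi gD)]
  linarith [mul_lt_mul_of_pos_left hcross (mul_pos htwo hpi)]

set_option maxHeartbeats 1000000 in
lemma key_step {α C D : ℝ} (hα0 : 0 < α) (hα2 : α < 2) {m : ℕ} (hm : 1 ≤ m)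
    (hC : -(α/2) < C) (hCD : C ≤ D) (hsum : C + D = (m - α)/2) :
    2^α * Real.Gamma (C + α/2) * Real.Gamma (D + α/2) * (Real.Gamma C)⁻¹ * (Real.Gamma D)⁻¹
      < 2^α * Real.Gamma (C + α/2 + 1/2) * Real.Gamma (D + α/2 + 1/2)
        * (Real.Gamma (C + 1/2))⁻¹ * (Real.Gamma (D + 1/2))⁻¹ := by
  have hm1 : (1:ℝ) ≤ (m:ℝ) := by exact_mod_cast hm
  have htwo : (0:ℝ) < 2^α := Real.rpow_pos_of_pos (by norm_num) α
  have hA0 : 0 < C + α/2 := by linarith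
  have hB0 : 0 < D + α/2 := by linarith
  have gA := Real.Gamma_pos_of_pos hA0
  have gB := Real.Gamma_pos_of_pos hB0
  have gA' := Real.Gamma_pos_of_pos (by linarith : (0:ℝ) < C + α/2 + 1/2)
  have gB' := Real.Gamma_pos_of_pos (by linarith : (0:ℝ) < D + α/2 + 1/2)
  have hD4 : -(1:ℝ)/4 < D := by linarith
  rcases lt_trichotomy C 0 with hCneg | hCzero | hCpos
  · -- C < 0
    have hCm1 : -1 < C := by linarith
    have gCneg : Real.Gamma C < 0 := Gamma_neg_of_neg hCm1 hCneg
    rcases Nat.lt_or_ge m 2 with hm2 | hm2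
    · have hm1' : m = 1 := by omega
      subst hm1'
      have hsum' : C + D = (1 - α)/2 := by
        rw [hsum]; norm_num
      exact key_m1 hα0 hα2 hC hCD hCneg hsum'
    · have hm2' : (2:ℝ) ≤ (m:ℝ) := by exact_mod_cast hm2
      have hDpos : 0 < D := by linarith
      have gD := Real.Gamma_pos_of_pos hDpos
      have gD' := Real.Gamma_pos_of_pos (by linarith : (0:ℝ) < D + 1/2)
      rcases lt_trichotomy (C + 1/2) 0 with hc2 | hc2 | hc2
      · exact key_core hα0 hα2 hm hC hc2 hDpos hsum
      · rw [hc2, Real.Gamma_zero]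
        simp only [inv_zero, mul_zero, zero_mul]
        have h1 : (Real.Gamma C)⁻¹ < 0 := inv_lt_zero.mpr gCneg
        have h2 : 0 < (Real.Gamma D)⁻¹ := inv_pos.mpr gD
        nlinarith [mul_pos (mul_pos (mul_pos htwo gA) gB) h2, h1]
      · have gC2 := Real.Gamma_pos_of_pos hc2
        have hL : 2^α * Real.Gamma (C+α/2) * Real.Gamma (D+α/2)
            * (Real.Gamma C)⁻¹ * (Real.Gamma D)⁻¹ < 0 := by
          have h1 : (Real.Gamma C)⁻¹ < 0 := inv_lt_zero.mpr gCneg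
          have h2 : 0 < (Real.Gamma D)⁻¹ := inv_pos.mpr gD
          nlinarith [mul_pos (mul_pos (mul_pos htwo gA) gB) h2, h1]
        have hR : 0 < 2^α * Real.Gamma (C+α/2+1/2) * Real.Gamma (D+α/2+1/2)
            * (Real.Gamma (C+1/2))⁻¹ * (Real.Gamma (D+1/2))⁻¹ := by
          exact mul_pos (mul_pos (mul_pos (mul_pos htwo gA') gB') (inv_pos.mpr gC2))
            (inv_pos.mpr gD')
        linarith
  · -- C = 0
    rw [hCzero, Real.Gamma_zero]
    simp only [inv_zero, mul_zero, zero_mul]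
    have hD0 : 0 ≤ D := by linarith
    have gC2 := Real.Gamma_pos_of_pos (by norm_num : (0:ℝ) < 0 + 1/2)
    have gD' := Real.Gamma_pos_of_pos (by linarith : (0:ℝ) < D + 1/2)
    have gA2 := Real.Gamma_pos_of_pos (by linarith : (0:ℝ) < 0 + α/2 + 1/2)
    have gB2 := Real.Gamma_pos_of_pos (by linarith : (0:ℝ) < D + α/2 + 1/2)
    exact mul_pos (mul_pos (mul_pos (mul_pos htwo gA2) gB2) (inv_pos.mpr gC2)) (inv_pos.mpr gD')
  · -- C > 0
    have hDpos : 0 < D := by linarith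
    have gC := Real.Gamma_pos_of_pos hCpos
    have gD := Real.Gamma_pos_of_pos hDpos
    have gC' := Real.Gamma_pos_of_pos (by linarith : (0:ℝ) < C + 1/2)
    have gD' := Real.Gamma_pos_of_pos (by linarith : (0:ℝ) < D + 1/2)
    have s1 : rr C < rr (C + α/2) := rr_strict hCpos (by linarith)
    have s2 : rr D < rr (D + α/2) := rr_strict hDpos (by linarith)
    have hrr : rr C * rr D < rr (C + α/2) * rr (D + α/2) :=
      mul_lt_mul'' s1 s2 (rr_pos hCpos).le (rr_pos hDpos).le
    simp only [rr] at hrr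
    rw [div_mul_div_comm, div_mul_div_comm] at hrr
    have h := (div_lt_div_iff₀ (mul_pos gC gD) (mul_pos gA gB)).mp hrr
    exact compare_aux htwo gC gD gC' gD' h


lemma Phi_step (d n : ℕ) (hd : 0 < d) {α σ : ℝ} (hα0 : 0 < α) (hα2 : α < 2)
    (h1 : -(n:ℝ) - α < σ) (h2 : σ ≤ ((d:ℝ) - α)/2) :
    Phi d n α σ < Phi d (n+1) α σ := by
  have hmain := key_step (α := α) (C := ((n:ℝ)+σ)/2) (D := ((d:ℝ)+n-σ-α)/2)
    (m := d + 2*n) hα0 hα2 (by omega : 1 ≤ d + 2*n)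
    (by linarith : -(α/2) < ((n:ℝ)+σ)/2)
    (by linarith : ((n:ℝ)+σ)/2 ≤ ((d:ℝ)+n-σ-α)/2)
    (by push_cast; ring)
  rw [show ((n:ℝ)+σ)/2 + α/2 + 1/2 = ((↑(n+1):ℝ) + σ + α)/2 by push_cast; ring,
    show ((d:ℝ)+n-σ-α)/2 + α/2 + 1/2 = ((d:ℝ) + (↑(n+1):ℝ) - σ)/2 by push_cast; ring,
    show ((n:ℝ)+σ)/2 + 1/2 = ((↑(n+1):ℝ) + σ)/2 by push_cast; ring,
    show ((d:ℝ)+n-σ-α)/2 + 1/2 = ((d:ℝ) + (↑(n+1):ℝ) - σ - α)/2 by push_cast; ring,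
    show ((n:ℝ)+σ)/2 + α/2 = ((n:ℝ) + σ + α)/2 by ring,
    show ((d:ℝ)+n-σ-α)/2 + α/2 = ((d:ℝ) + n - σ)/2 by ring] at hmain
  simp only [Phi]
  exact hmain

/-- for `ℓ > ℓ′ ≥ 0` and `σ ∈ (−ℓ′−α, (d−α)/2]` one has
`Φ_{d,ℓ}^{(α)}(σ) > Φ_{d,ℓ′}^{(α)}(σ)`. -/
theorem phi_strictMono_in_angular_momentum (d l l' : ℕ) (hd : 0 < d) (hll' : l' < l)
    (α : ℝ) (hα : α ∈ Set.Ioo (0:ℝ) 2) :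
    ∀ σ : ℝ, -(l' : ℝ) - α < σ → σ ≤ ((d : ℝ) - α) / 2 →
      Phi d l' α σ < Phi d l α σ := by
  intro σ h1 h2
  obtain ⟨hα0, hα2⟩ := hα
  have step : ∀ n : ℕ, l' ≤ n → Phi d n α σ < Phi d (n+1) α σ := by
    intro n hn
    have hcast : (l':ℝ) ≤ (n:ℝ) := by exact_mod_cast hn
    exact Phi_step d n hd hα0 hα2 (by linarith) h2
  have main : ∀ n, l' + 1 ≤ n → Phi d l' α σ < Phi d n α σ := by
    intro n hn
    induction n with
    | zero => omega
    | succ k IH =>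
      rcases Nat.lt_or_ge (l'+1) (k+1) with h | h
      · exact (IH (by omega)).trans (step k (by omega))
      · have hk : k = l' := by omega
        subst hk
        exact step k le_rfl
  exact main l hll'
end

section
/- Let d ∈ ℕ, let ℓ ≥ 0 be an integer, let σ ∈ ℝ, and let u ∈ C_c^∞((0,∞); ℂ). Then ∫₀^∞ |(d/dr)(r^{−σ} u(r))|² · r^{d−1} dr + ℓ(d+ℓ−2) · ∫₀^∞ |u(r)|² · r^{d−3−2σ} dr = ∫₀^∞ |u′(r)|² · r^{d−1−2σ} dr + (ℓ+σ)(d+ℓ−σ−2) · ∫₀^∞ |u(r)|² · r^{d−3−2σ} dr. -/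
open MeasureTheory

private lemma norm_sq_complex (z : ℂ) : ‖z‖ ^ 2 = z.re ^ 2 + z.im ^ 2 := by
  rw [Complex.sq_norm, Complex.normSq_apply]; ring

private lemma aux_integrable {w : ℝ → ℝ} (hw : Continuous w) {ε R : ℝ} (hε : 0 < ε)
    (hw0 : ∀ r ∉ Set.Icc ε R, w r = 0) (c : ℝ) :
    MeasureTheory.Integrable (fun r : ℝ => w r * r ^ c) := by
  have hcont : Continuous fun r : ℝ => w r * r ^ c := by
    rw [continuous_iff_continuousAt]
    intro x
    by_cases hx : 0 < x
    · exact hw.continuousAt.mul (Real.continuousAt_rpow_const x c (Or.inl hx.ne'))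
    · have hev : ∀ᶠ y in nhds x, y ∈ Set.Iio ε :=
        Iio_mem_nhds (lt_of_le_of_lt (not_lt.1 hx) hε)
      have heq : (fun r : ℝ => w r * r ^ c) =ᶠ[nhds x] fun _ => (0 : ℝ) := by
        filter_upwards [hev] with y hy
        rw [hw0 y (fun h => absurd h.1 (not_le.2 hy)), zero_mul]
      exact (continuousAt_congr heq).2 continuousAt_const
  have hcs : HasCompactSupport fun r : ℝ => w r * r ^ c := by
    apply HasCompactSupport.intro (isCompact_Icc (a := ε) (b := R))
    intro x hx; rw [hw0 x hx, zero_mul]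
  exact hcont.integrable_of_hasCompactSupport hcs

/-- the half-line (radial) ground state identity for the Laplacian
with Hardy potential in the angular momentum channel `ℓ`:
`∫₀^∞ |(r^{−σ}u)′|² r^{d−1} dr + ℓ(d+ℓ−2)·∫₀^∞ |u|² r^{d−3−2σ} dr
 = ∫₀^∞ |u′|² r^{d−1−2σ} dr + (ℓ+σ)(d+ℓ−σ−2)·∫₀^∞ |u|² r^{d−3−2σ} dr`
for `u ∈ C_c^∞((0,∞);ℂ)`. -/
theorem radial_ground_state_identity_alpha_two (d l : ℕ) (hd : 0 < d) (σ : ℝ)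
    (u : ℝ → ℂ) (hu : ContDiff ℝ (⊤ : ℕ∞) u) (hsupp : HasCompactSupport u)
    (hsupp' : tsupport u ⊆ Set.Ioi 0) :
    (∫ r in Set.Ioi (0:ℝ),
        ‖deriv (fun x : ℝ => (x ^ (-σ) : ℝ) • u x) r‖ ^ 2 * r ^ ((d : ℝ) - 1)) +
      (l : ℝ) * ((d : ℝ) + l - 2) *
        ∫ r in Set.Ioi (0:ℝ), ‖u r‖ ^ 2 * r ^ ((d : ℝ) - 3 - 2 * σ) =
    (∫ r in Set.Ioi (0:ℝ), ‖deriv u r‖ ^ 2 * r ^ ((d : ℝ) - 1 - 2 * σ)) +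
      ((l : ℝ) + σ) * ((d : ℝ) + l - σ - 2) *
        ∫ r in Set.Ioi (0:ℝ), ‖u r‖ ^ 2 * r ^ ((d : ℝ) - 3 - 2 * σ) := by
  have hud : Differentiable ℝ u := hu.differentiable (by simp)
  have hduc : Continuous (deriv u) := hu.continuous_deriv (by simp)
  -- support bounds
  obtain ⟨ε, R, hε, hεR, hz⟩ :
      ∃ ε R : ℝ, 0 < ε ∧ ε ≤ R ∧ ∀ r ∉ Set.Icc ε R, ∀ᶠ x in nhds r, u x = 0 := by
    rcases (tsupport u).eq_empty_or_nonempty with h | h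
    · refine ⟨1, 1, one_pos, le_refl _, fun r _ => ?_⟩
      exact Filter.Eventually.of_forall fun x =>
        image_eq_zero_of_notMem_tsupport (by simp [h])
    · have hK : IsCompact (tsupport u) := hsupp
      have hmem : sInf (tsupport u) ∈ tsupport u := hK.sInf_mem h
      have hmem' : sSup (tsupport u) ∈ tsupport u := hK.sSup_mem h
      refine ⟨sInf (tsupport u), sSup (tsupport u), hsupp' hmem,
        csInf_le_csSup h hK.bddBelow hK.bddAbove, fun r hr => ?_⟩
      have hrc : r ∈ (tsupport u)ᶜ := fun hm =>
        hr ⟨csInf_le hK.bddBelow hm, le_csSup hK.bddAbove hm⟩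
      filter_upwards [(isClosed_tsupport u).isOpen_compl.mem_nhds hrc] with x hx
      exact image_eq_zero_of_notMem_tsupport hx
  have hu0 : ∀ r ∉ Set.Icc ε R, u r = 0 := fun r hr => (hz r hr).self_of_nhds
  have hdu0 : ∀ r ∉ Set.Icc ε R, deriv u r = 0 := by
    intro r hr
    have h1 : deriv u r = deriv (fun _ : ℝ => (0 : ℂ)) r :=
      Filter.EventuallyEq.deriv_eq (hz r hr)
    simpa using h1
  -- the cross-term density
  set w : ℝ → ℝ := fun r => (u r).re * (deriv u r).re + (u r).im * (deriv u r).im with hwdef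
  have hwcont : Continuous w :=
    ((Complex.continuous_re.comp hu.continuous).mul
        (Complex.continuous_re.comp hduc)).add
      ((Complex.continuous_im.comp hu.continuous).mul (Complex.continuous_im.comp hduc))
  have hw0 : ∀ r ∉ Set.Icc ε R, w r = 0 := by
    intro r hr; simp [hwdef, hu0 r hr]
  have hnu0 : ∀ r ∉ Set.Icc ε R, ‖u r‖ ^ 2 = 0 := by
    intro r hr; simp [hu0 r hr]
  have hndu0 : ∀ r ∉ Set.Icc ε R, ‖deriv u r‖ ^ 2 = 0 := by
    intro r hr; simp [hdu0 r hr]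
  -- integrability
  have intA : Integrable (fun r : ℝ => ‖deriv u r‖ ^ 2 * r ^ ((d : ℝ) - 1 - 2 * σ)) :=
    aux_integrable (hduc.norm.pow 2) hε hndu0 _
  have intB : Integrable (fun r : ℝ => ‖u r‖ ^ 2 * r ^ ((d : ℝ) - 3 - 2 * σ)) :=
    aux_integrable (hu.continuous.norm.pow 2) hε hnu0 _
  have intX : Integrable (fun r : ℝ => w r * r ^ ((d : ℝ) - 2 - 2 * σ)) :=
    aux_integrable hwcont hε hw0 _
  -- derivative of ‖u‖²
  have hn : ∀ r : ℝ, HasDerivAt (fun x => ‖u x‖ ^ 2) (2 * w r) r := by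
    intro r
    have h := (hud r).hasDerivAt
    have ha : HasDerivAt (fun x => (u x).re) ((deriv u r).re) r :=
      (Complex.reCLM.hasFDerivAt.comp_hasDerivAt r h)
    have hb : HasDerivAt (fun x => (u x).im) ((deriv u r).im) r :=
      (Complex.imCLM.hasFDerivAt.comp_hasDerivAt r h)
    have h2 := ((ha.pow 2).add (hb.pow 2))
    have heq : (fun x => ‖u x‖ ^ 2) = fun x => (u x).re ^ 2 + (u x).im ^ 2 := by
      funext x; exact norm_sq_complex (u x)
    rw [heq]
    refine h2.congr_deriv (Eq.symm ?_)
    simp [hwdef]; ring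
  -- derivative of the weighted function
  have hv : ∀ r ∈ Set.Ioi (0:ℝ), HasDerivAt (fun x : ℝ => (x ^ (-σ) : ℝ) • u x)
      ((r ^ (-σ) : ℝ) • deriv u r + (-σ * r ^ (-σ - 1)) • u r) r := by
    intro r hr
    have h1 : HasDerivAt (fun x : ℝ => x ^ (-σ)) (-σ * r ^ (-σ - 1)) r := by
      simpa using Real.hasDerivAt_rpow_const (p := -σ) (Or.inl (ne_of_gt hr))
    exact h1.smul (hud r).hasDerivAt
  -- pointwise algebraic identity on (0,∞)
  have hpoint : ∀ r ∈ Set.Ioi (0:ℝ),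
      ‖(r ^ (-σ) : ℝ) • deriv u r + (-σ * r ^ (-σ - 1)) • u r‖ ^ 2 * r ^ ((d : ℝ) - 1)
        = ‖deriv u r‖ ^ 2 * r ^ ((d : ℝ) - 1 - 2 * σ)
          + σ ^ 2 * (‖u r‖ ^ 2 * r ^ ((d : ℝ) - 3 - 2 * σ))
          - 2 * σ * (w r * r ^ ((d : ℝ) - 2 - 2 * σ)) := by
    intro r hr
    have hr' : (0:ℝ) < r := hr
    have e1 : r ^ ((d : ℝ) - 1 - 2 * σ) = r ^ (-σ) * r ^ (-σ) * r ^ ((d : ℝ) - 1) := by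
      rw [← Real.rpow_add hr', ← Real.rpow_add hr']; congr 1; ring
    have e2 : r ^ ((d : ℝ) - 3 - 2 * σ) = r ^ (-σ - 1) * r ^ (-σ - 1) * r ^ ((d : ℝ) - 1) := by
      rw [← Real.rpow_add hr', ← Real.rpow_add hr']; congr 1; ring
    have e3 : r ^ ((d : ℝ) - 2 - 2 * σ) = r ^ (-σ - 1) * r ^ (-σ) * r ^ ((d : ℝ) - 1) := by
      rw [← Real.rpow_add hr', ← Real.rpow_add hr']; congr 1; ring
    rw [e1, e2, e3, norm_sq_complex, norm_sq_complex, norm_sq_complex]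
    simp only [Complex.add_re, Complex.add_im, Complex.smul_re, Complex.smul_im,
      smul_eq_mul, hwdef]
    ring
  -- Part 1: expansion of the first integral
  have hI1 : (∫ r in Set.Ioi (0:ℝ),
        ‖deriv (fun x : ℝ => (x ^ (-σ) : ℝ) • u x) r‖ ^ 2 * r ^ ((d : ℝ) - 1))
      = (∫ r in Set.Ioi (0:ℝ), ‖deriv u r‖ ^ 2 * r ^ ((d : ℝ) - 1 - 2 * σ))
        + σ ^ 2 * (∫ r in Set.Ioi (0:ℝ), ‖u r‖ ^ 2 * r ^ ((d : ℝ) - 3 - 2 * σ))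
        - 2 * σ * (∫ r in Set.Ioi (0:ℝ), w r * r ^ ((d : ℝ) - 2 - 2 * σ)) := by
    have step1 : (∫ r in Set.Ioi (0:ℝ),
          ‖deriv (fun x : ℝ => (x ^ (-σ) : ℝ) • u x) r‖ ^ 2 * r ^ ((d : ℝ) - 1))
        = ∫ r in Set.Ioi (0:ℝ),
            (‖deriv u r‖ ^ 2 * r ^ ((d : ℝ) - 1 - 2 * σ)
              + σ ^ 2 * (‖u r‖ ^ 2 * r ^ ((d : ℝ) - 3 - 2 * σ))
              - 2 * σ * (w r * r ^ ((d : ℝ) - 2 - 2 * σ))) := by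
      refine setIntegral_congr_fun measurableSet_Ioi fun r hr => ?_
      rw [(hv r hr).deriv]
      exact hpoint r hr
    have hB2 : Integrable (fun r : ℝ =>
        σ ^ 2 * (‖u r‖ ^ 2 * r ^ ((d : ℝ) - 3 - 2 * σ))) volume := intB.const_mul _
    have hX2 : Integrable (fun r : ℝ =>
        2 * σ * (w r * r ^ ((d : ℝ) - 2 - 2 * σ))) volume := intX.const_mul _
    have hAB : Integrable (fun r : ℝ => ‖deriv u r‖ ^ 2 * r ^ ((d : ℝ) - 1 - 2 * σ)
        + σ ^ 2 * (‖u r‖ ^ 2 * r ^ ((d : ℝ) - 3 - 2 * σ))) volume := intA.add hB2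
    rw [step1, integral_sub hAB.integrableOn hX2.integrableOn,
      integral_add intA.integrableOn hB2.integrableOn, integral_const_mul, integral_const_mul]
  -- Part 2: integration by parts
  have hIBP : ((d : ℝ) - 2 - 2 * σ) *
        (∫ r in Set.Ioi (0:ℝ), ‖u r‖ ^ 2 * r ^ ((d : ℝ) - 3 - 2 * σ))
      + 2 * (∫ r in Set.Ioi (0:ℝ), w r * r ^ ((d : ℝ) - 2 - 2 * σ)) = 0 := by
    set ν : ℝ := (d : ℝ) - 2 - 2 * σ with hν
    set g : ℝ → ℝ := fun r =>
      ν * (‖u r‖ ^ 2 * r ^ ((d : ℝ) - 3 - 2 * σ)) + 2 * (w r * r ^ ν) with hg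
    have intg : Integrable g := (intB.const_mul ν).add (intX.const_mul 2)
    have hg0 : ∀ r ∉ Set.Icc ε R, g r = 0 := by
      intro r hr
      simp only [hg, hnu0 r hr, hw0 r hr, zero_mul, mul_zero, add_zero]
    have hGderiv : ∀ x ∈ Set.Icc (ε/2) (R+1),
        HasDerivAt (fun r : ℝ => r ^ ν * ‖u r‖ ^ 2) (g x) x := by
      intro x hx
      have hx0 : (0:ℝ) < x := lt_of_lt_of_le (by linarith) hx.1
      have hp : HasDerivAt (fun r : ℝ => r ^ ν) (ν * x ^ (ν - 1)) x :=
        Real.hasDerivAt_rpow_const (Or.inl hx0.ne')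
      have hder := hp.mul (hn x)
      refine hder.congr_deriv (Eq.symm ?_)
      have hexp : x ^ (ν - 1) = x ^ ((d : ℝ) - 3 - 2 * σ) := by
        congr 1; rw [hν]; ring
      show ν * (‖u x‖ ^ 2 * x ^ ((d : ℝ) - 3 - 2 * σ)) + 2 * (w x * x ^ ν)
          = ν * x ^ (ν - 1) * ‖u x‖ ^ 2 + x ^ ν * (2 * w x)
      rw [hexp]; ring
    have hle : ε/2 ≤ R + 1 := by linarith
    have key : (∫ r in Set.Ioi (0:ℝ), g r) = 0 := by
      have t1 : (∫ r in Set.Ioi (0:ℝ), g r) = ∫ r, g r := by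
        refine setIntegral_eq_integral_of_forall_compl_eq_zero fun x hx => ?_
        refine hg0 x fun hm => hx ?_
        exact lt_of_lt_of_le hε hm.1
      have t2 : (∫ r, g r) = ∫ r in Set.Ioc (ε/2) (R+1), g r := by
        refine (setIntegral_eq_integral_of_forall_compl_eq_zero fun x hx => ?_).symm
        refine hg0 x fun hm => hx ⟨by linarith [hm.1], by linarith [hm.2]⟩
      have t3 : (∫ r in Set.Ioc (ε/2) (R+1), g r) = ∫ r in (ε/2)..(R+1), g r :=
        (intervalIntegral.integral_of_le hle).symm
      have t4 : (∫ r in (ε/2)..(R+1), g r)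
          = (R+1) ^ ν * ‖u (R+1)‖ ^ 2 - (ε/2) ^ ν * ‖u (ε/2)‖ ^ 2 := by
        have t4' := intervalIntegral.integral_eq_sub_of_hasDerivAt
          (f := fun r : ℝ => r ^ ν * ‖u r‖ ^ 2) (f' := g) (a := ε/2) (b := R+1)
          (fun x hx => hGderiv x (by rwa [Set.uIcc_of_le hle] at hx))
          intg.intervalIntegrable
        simpa using t4'
      have hz1 : u (R+1) = 0 := hu0 _ (by intro hm; linarith [hm.2])
      have hz2 : u (ε/2) = 0 := hu0 _ (by intro hm; linarith [hm.1])
      rw [t1, t2, t3, t4, hz1, hz2]; simp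
    have hB3 : Integrable (fun r : ℝ =>
        ν * (‖u r‖ ^ 2 * r ^ ((d : ℝ) - 3 - 2 * σ))) volume := intB.const_mul _
    have hX3 : Integrable (fun r : ℝ => 2 * (w r * r ^ ν)) volume := intX.const_mul _
    have hsplit : (∫ r in Set.Ioi (0:ℝ), g r)
        = ν * (∫ r in Set.Ioi (0:ℝ), ‖u r‖ ^ 2 * r ^ ((d : ℝ) - 3 - 2 * σ))
          + 2 * (∫ r in Set.Ioi (0:ℝ), w r * r ^ ν) := by
      simp only [hg]
      rw [integral_add hB3.integrableOn hX3.integrableOn, integral_const_mul,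
        integral_const_mul]
    rw [hsplit] at key
    exact key
  rw [hI1]
  linear_combination (-σ) * hIBP
end
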